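/- Let F be a field of characteristic 2 and let u ∈ F((x⁻¹)) be irrational with partial quotients p₀, p₁, … and complete quotients u₀, u₁, …. Suppose Q, R, S, T ∈ F[x] with S ≠ 0, D := Q·T − R·S ≠ 0, S·uⱼ² + T ≠ 0, and uᵢ = (Q·uⱼ² + R)/(S·uⱼ² + T) for some indices i, j. If deg(S·uⱼ²) > deg T and deg S + deg(S·uⱼ²) > deg D, then the partial quotient pᵢ = ⌊uᵢ⌋ equals the quotient upon polynomial division of Q by S; this follows since uᵢ − Q/S = −D/(S·(S·uⱼ² + T)). -/

import Mathlib

open Polynomial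
open scoped Classical

noncomputable section

namespace PaperCF

/-- The element `x` of `F((x⁻¹))`, realized as the Hahn series `T⁻¹` where `T` is the
Hahn-series variable (so a series in `x⁻¹` has well-ordered support in `T`). -/
def xx (F : Type*) [Field F] : LaurentSeries F := HahnSeries.single (-1 : ℤ) 1

/-- Embedding of the polynomial ring `F[x]` into `F((x⁻¹))`, `x ↦ xx`. -/
def polyEmb (F : Type*) [Field F] : Polynomial F →+* LaurentSeries F :=
  (Polynomial.aeval (xx F)).toRingHom

/-- The degree of a Laurent series in `x⁻¹` (largest exponent of `x` with nonzero
coefficient), with `deg 0 = ⊥`. -/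
def degB (F : Type*) [Field F] (u : LaurentSeries F) : WithBot ℤ :=
  if u = 0 then ⊥ else (-u.order : ℤ)

/-- The non-archimedean absolute value `|u| = q ^ deg u` (and `|0| = 0`). -/
def absVal (F : Type*) [Field F] (q : ℝ) (u : LaurentSeries F) : ℝ :=
  if u = 0 then 0 else q ^ (-u.order)

/-- `u` is irrational: it is not a ratio of two polynomials in `x`. -/
def IsIrrational (F : Type*) [Field F] (u : LaurentSeries F) : Prop :=
  ∀ a b : Polynomial F, b ≠ 0 → u * polyEmb F b ≠ polyEmb F a

/-- The (necessarily unique, non-terminating) continued fraction expansion of `u`: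
`p i` are the partial quotients, `U i` the complete quotients.  The condition
`0 < (U i - p i).order` says exactly that `p i` is the integral part of `U i`
(the difference has only negative powers of `x`). -/
structure CFExpansion (F : Type*) [Field F] (u : LaurentSeries F) where
  p : ℕ → Polynomial F
  U : ℕ → LaurentSeries F
  U_zero : U 0 = u
  ne : ∀ i, U i ≠ polyEmb F (p i)
  intPart : ∀ i, 0 < (U i - polyEmb F (p i)).order
  step : ∀ i, U (i + 1) = (U i - polyEmb F (p i))⁻¹

/-- Numerators `aₙ` of the convergents: `aₙ = pₙ aₙ₋₁ + aₙ₋₂`. -/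
def convNum {F : Type*} [Field F] (p : ℕ → Polynomial F) : ℕ → Polynomial F
  | 0 => p 0
  | 1 => p 1 * p 0 + 1
  | (n + 2) => p (n + 2) * convNum p (n + 1) + convNum p n

/-- Denominators `bₙ` of the convergents: `bₙ = pₙ bₙ₋₁ + bₙ₋₂`. -/
def convDen {F : Type*} [Field F] (p : ℕ → Polynomial F) : ℕ → Polynomial F
  | 0 => 1
  | 1 => p 1
  | (n + 2) => p (n + 2) * convDen p (n + 1) + convDen p n

/-- The `n`-th convergent `cₙ = aₙ/bₙ = [p₀; p₁, …, pₙ]`. -/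
def conv (F : Type*) [Field F] (p : ℕ → Polynomial F) (n : ℕ) : LaurentSeries F :=
  polyEmb F (convNum p n) / polyEmb F (convDen p n)

/-- `u` has bounded partial quotients. -/
def HasBoundedPQ (F : Type*) [Field F] (u : LaurentSeries F) : Prop :=
  ∃ cf : CFExpansion F u, ∃ N : ℕ, ∀ i, (cf.p i).natDegree ≤ N

/-- The integral part `⌊u⌋ ∈ F[x]`: the sum of the terms of `u` of nonnegative degree. -/
def intPart (F : Type*) [Field F] (u : LaurentSeries F) : Polynomial F :=
  ∑ n ∈ Finset.Icc (0 : ℤ) (-u.order), Polynomial.monomial n.toNat (u.coeff (-n))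

/-- The sequence of complete quotients produced by the continued fraction algorithm
(with junk value `0⁻¹ = 0` after termination). -/
def cqSeq (F : Type*) [Field F] (u : LaurentSeries F) : ℕ → LaurentSeries F
  | 0 => u
  | n + 1 => (cqSeq F u n - polyEmb F (intPart F (cqSeq F u n)))⁻¹

/-!
Write `D = QT - RS` and `V = S uⱼ² + T`; clearing denominators gives `uᵢ - Q/S = -D/(SV)`.
Since `deg T < deg(S uⱼ²)`, the ultrametric inequality gives `deg V = deg(S uⱼ²)`, so the
hypothesis on `deg D` says exactly that `D/(SV)` has negative degree. The series `Q/S` differs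
from the polynomial quotient of `Q` by `S` by `(Q % S)/S`, again of negative degree. So `uᵢ` minus
that quotient has negative degree, and the integral part of `uᵢ` is the only polynomial with this
property.
-/
lemma mul_add_div_mul_add_sub_div {K : Type*} [Field K] {q r s t w : K} (hs : s ≠ 0)
    (hv : s * w + t ≠ 0) :
    (q * w + r) / (s * w + t) - q / s = -(q * t - r * s) / (s * (s * w + t)) := by
  rw [div_sub_div _ _ hv hs, div_eq_div_iff (mul_ne_zero hv hs) (mul_ne_zero hs hv)]
  ring

section

variable {F : Type*} [Field F]

lemma polyEmb_monomial (n : ℕ) (a : F) :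
    polyEmb F (monomial n a) = HahnSeries.single (-(n : ℤ)) a := by
  change aeval (xx F) (monomial n a) = _
  rw [aeval_monomial, xx, HahnSeries.single_pow, LaurentSeries.algebraMap_apply,
    HahnSeries.C_apply, HahnSeries.single_mul_single]
  simp

lemma coeff_polyEmb (P : F[X]) (n : ℕ) : (polyEmb F P).coeff (-(n : ℤ)) = P.coeff n := by
  induction P using Polynomial.induction_on' with
  | add p q hp hq => simp [hp, hq]
  | monomial k a => simp [polyEmb_monomial, HahnSeries.coeff_single, coeff_monomial, eq_comm]

lemma coeff_polyEmb_of_pos (P : F[X]) {m : ℤ} (hm : 0 < m) : (polyEmb F P).coeff m = 0 := by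
  induction P using Polynomial.induction_on' with
  | add p q hp hq => simp [hp, hq]
  | monomial k a => 
    simp only [polyEmb_monomial, HahnSeries.coeff_single, ite_eq_right_iff]
    omega

lemma polyEmb_ne_zero {P : F[X]} (hP : P ≠ 0) : polyEmb F P ≠ 0 := fun h =>
  leadingCoeff_ne_zero.mpr hP (by rw [leadingCoeff, ← coeff_polyEmb, h, HahnSeries.coeff_zero])

lemma order_polyEmb {P : F[X]} (hP : P ≠ 0) : (polyEmb F P).order = -(P.natDegree : ℤ) := by
  have hlead : (polyEmb F P).coeff (-(P.natDegree : ℤ)) ≠ 0 := by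
    rwa [coeff_polyEmb, ← leadingCoeff, leadingCoeff_ne_zero]
  refine le_antisymm (HahnSeries.order_le_of_coeff_ne_zero hlead) ?_
  have hne : (polyEmb F P).coeff (polyEmb F P).order ≠ 0 :=
    HahnSeries.coeff_order_eq_zero.not.mpr (polyEmb_ne_zero hP)
  obtain ⟨k, hk⟩ : ∃ k : ℕ, (polyEmb F P).order = -(k : ℤ) := by
    by_contra! h
    exact hne (coeff_polyEmb_of_pos P (by have := h (-(polyEmb F P).order).toNat; omega))
  rw [hk, coeff_polyEmb] at hne
  have := le_natDegree_of_ne_zero hne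
  omega

lemma degB_zero : degB F 0 = ⊥ := if_pos rfl

lemma degB_of_ne_zero {x : LaurentSeries F} (hx : x ≠ 0) :
    degB F x = ((-x.order : ℤ) : WithBot ℤ) :=
  if_neg hx

lemma ne_zero_of_degB_lt {x y : LaurentSeries F} (h : degB F x < degB F y) : y ≠ 0 := by
  rintro rfl
  exact not_lt_bot (degB_zero (F := F) ▸ h)

lemma degB_lt_zero_iff {x : LaurentSeries F} : degB F x < 0 ↔ x = 0 ∨ 0 < x.order := by
  by_cases hx : x = 0
  · simp [hx, degB_zero]
  · rw [degB_of_ne_zero hx]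
    norm_cast
    simp [hx]

lemma degB_neg (x : LaurentSeries F) : degB F (-x) = degB F x := by
  simp [degB, HahnSeries.order_neg]

lemma degB_mul (x y : LaurentSeries F) : degB F (x * y) = degB F x + degB F y := by
  by_cases hx : x = 0
  · simp [hx, degB_zero]
  by_cases hy : y = 0
  · simp [hy, degB_zero]
  rw [degB_of_ne_zero (mul_ne_zero hx hy), degB_of_ne_zero hx, degB_of_ne_zero hy,
    HahnSeries.order_mul hx hy, ← WithBot.coe_add, neg_add]

lemma degB_add_le (x y : LaurentSeries F) : degB F (x + y) ≤ max (degB F x) (degB F y) := by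
  by_cases hx : x = 0
  · simp [hx]
  by_cases hy : y = 0
  · simp [hy]
  by_cases hxy : x + y = 0
  · simp [hxy, degB_zero]
  rw [degB_of_ne_zero hxy, degB_of_ne_zero hx, degB_of_ne_zero hy]
  have := HahnSeries.min_order_le_order_add hxy
  norm_cast
  omega

lemma degB_add_eq_left_of_lt {x y : LaurentSeries F} (h : degB F y < degB F x) :
    degB F (x + y) = degB F x := by
  refine le_antisymm ((degB_add_le x y).trans (max_le le_rfl h.le)) ?_
  have := degB_add_le (x + y) (-y)
  rw [add_neg_cancel_right, degB_neg] at this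
  exact (le_max_iff.mp this).resolve_right h.not_ge

lemma degB_add_lt_zero {x y : LaurentSeries F} (hx : degB F x < 0) (hy : degB F y < 0) :
    degB F (x + y) < 0 :=
  (degB_add_le x y).trans_lt (max_lt hx hy)

lemma degB_div_lt_zero {x y : LaurentSeries F} (h : degB F x < degB F y) :
    degB F (x / y) < 0 := by
  have hy := ne_zero_of_degB_lt h
  rw [← div_mul_cancel₀ x hy, degB_mul, degB_of_ne_zero hy] at h
  rw [← WithBot.add_lt_add_iff_right (WithBot.coe_ne_bot), zero_add]
  exact h

lemma degB_polyEmb {P : F[X]} (hP : P ≠ 0) : degB F (polyEmb F P) = (P.natDegree : ℤ) := by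
  rw [degB_of_ne_zero (polyEmb_ne_zero hP), order_polyEmb hP, neg_neg]

lemma eq_zero_of_degB_polyEmb_lt_zero {P : F[X]} (h : degB F (polyEmb F P) < 0) : P = 0 := by
  by_contra hP
  rw [degB_polyEmb hP] at h
  exact absurd (WithBot.coe_lt_coe.mp h) (by omega)

lemma degB_polyEmb_div_sub_polyEmb_div_lt_zero (Q : F[X]) {S : F[X]} (hS : S ≠ 0) :
    degB F (polyEmb F Q / polyEmb F S - polyEmb F (Q / S)) < 0 := by
  have hsplit :
      polyEmb F Q / polyEmb F S - polyEmb F (Q / S) = polyEmb F (Q % S) / polyEmb F S := by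
    rw [div_sub' (polyEmb_ne_zero hS), ← map_mul, ← map_sub, EuclideanDomain.mod_eq_sub_mul_div,
      mul_comm S]
  rw [hsplit]
  apply degB_div_lt_zero
  rw [degB_polyEmb hS]
  by_cases hr : Q % S = 0
  · simp [hr, degB_zero]
  · rw [degB_polyEmb hr]
    exact_mod_cast natDegree_lt_natDegree hr (EuclideanDomain.mod_lt Q hS)

lemma eq_of_degB_sub_lt_zero {U : LaurentSeries F} {P P' : F[X]}
    (h : degB F (U - polyEmb F P) < 0) (h' : degB F (U - polyEmb F P') < 0) : P = P' := by
  rw [← sub_eq_zero]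
  apply eq_zero_of_degB_polyEmb_lt_zero
  rw [map_sub, ← sub_sub_sub_cancel_left _ _ U, sub_eq_add_neg]
  exact degB_add_lt_zero h' (by rwa [degB_neg])

lemma CFExpansion.degB_sub_p_lt_zero {u : LaurentSeries F} (cf : CFExpansion F u) (i : ℕ) :
    degB F (cf.U i - polyEmb F (cf.p i)) < 0 :=
  degB_lt_zero_iff.mpr (Or.inr (cf.intPart i))

end

theorem statement16_general (F : Type*) [Field F] (u : LaurentSeries F)
    (cf : CFExpansion F u)
    (Q R S T : Polynomial F) (i j : ℕ)
    (heq : cf.U i = (polyEmb F Q * (cf.U j) ^ 2 + polyEmb F R) /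
      (polyEmb F S * (cf.U j) ^ 2 + polyEmb F T))
    (h1 : degB F (polyEmb F T) < degB F (polyEmb F S * (cf.U j) ^ 2))
    (h2 : degB F (polyEmb F (Q * T - R * S))
      < degB F (polyEmb F S) + degB F (polyEmb F S * (cf.U j) ^ 2)) :
    cf.p i = Q / S ∧
    cf.U i - polyEmb F Q / polyEmb F S
      = -polyEmb F (Q * T - R * S) /
        (polyEmb F S * (polyEmb F S * (cf.U j) ^ 2 + polyEmb F T)) := by
  have hdegV : degB F (polyEmb F S * cf.U j ^ 2 + polyEmb F T)
      = degB F (polyEmb F S * cf.U j ^ 2) := degB_add_eq_left_of_lt h1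
  have hlt : degB F (-polyEmb F (Q * T - R * S))
      < degB F (polyEmb F S * (polyEmb F S * cf.U j ^ 2 + polyEmb F T)) := by
    rwa [degB_neg, degB_mul, hdegV]
  obtain ⟨hSE, hV⟩ := mul_ne_zero_iff.mp (ne_zero_of_degB_lt hlt)
  have hS : S ≠ 0 := by
    rintro rfl
    exact hSE (map_zero _)
  have key : cf.U i - polyEmb F Q / polyEmb F S
      = -polyEmb F (Q * T - R * S) /
        (polyEmb F S * (polyEmb F S * (cf.U j) ^ 2 + polyEmb F T)) := by
    rw [heq, map_sub, map_mul, map_mul]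
    exact mul_add_div_mul_add_sub_div hSE hV
  refine ⟨eq_of_degB_sub_lt_zero (cf.degB_sub_p_lt_zero i) ?_, key⟩
  rw [← sub_add_sub_cancel (cf.U i) (polyEmb F Q / polyEmb F S), key]
  exact degB_add_lt_zero (degB_div_lt_zero hlt) (degB_polyEmb_div_sub_polyEmb_div_lt_zero Q hS)

/-- the main computational principle: if `deg(S·uⱼ²) > deg T` and
`deg S + deg(S·uⱼ²) > deg D`, then `pᵢ` is the quotient of `Q` by `S`, which follows
from `uᵢ - Q/S = -D/(S(Suⱼ²+T))`. -/
theorem statement16 (F : Type*) [Field F] [CharP F 2] (u : LaurentSeries F)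
    (hu : IsIrrational F u) (cf : CFExpansion F u)
    (Q R S T : Polynomial F) (i j : ℕ)
    (hS : S ≠ 0) (hD : Q * T - R * S ≠ 0)
    (hden : polyEmb F S * (cf.U j) ^ 2 + polyEmb F T ≠ 0)
    (heq : cf.U i = (polyEmb F Q * (cf.U j) ^ 2 + polyEmb F R) /
      (polyEmb F S * (cf.U j) ^ 2 + polyEmb F T))
    (h1 : degB F (polyEmb F T) < degB F (polyEmb F S * (cf.U j) ^ 2))
    (h2 : degB F (polyEmb F (Q * T - R * S))
      < degB F (polyEmb F S) + degB F (polyEmb F S * (cf.U j) ^ 2)) :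
    cf.p i = Q / S ∧
    cf.U i - polyEmb F Q / polyEmb F S
      = -polyEmb F (Q * T - R * S) /
        (polyEmb F S * (polyEmb F S * (cf.U j) ^ 2 + polyEmb F T)) :=
  statement16_general F u cf Q R S T i j heq h1 h2

end PaperCF
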